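/- arXiv:2006.14346 — 7 statements merged into one kernel-verified Lean document; each statement's English description precedes it below -/
import Mathlib

section
/- Let ε ≥ 0 be a real number and let c : ℝ → ℝ be an ε-drift-bounded clock. Suppose that at real time t₁ a time interval [L, U] is obtained satisfying L ≤ t₁ ≤ U, and the caller then waits until a real time t₂ at which its local clock has advanced by at least (U − L)(1 + ε), i.e. c t₂ − c t₁ ≥ (U − L)·(1 + ε). Then L ≤ t₁ ≤ U ≤ t₂. In particular the returned timestamp U lies in the real-time interval [t₁, t₂] spanned by the call, and U is in the past at the moment the call returns. (Lemma 1, part 1: correctness of the GET_TS uncertainty wait.) -/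
/-- An ε-drift-bounded clock: a map from real (clock-master) time to local clock
readings whose rate relative to real time is within a factor `1 + ε`. -/
def DriftBoundedClock (ε : ℝ) (c : ℝ → ℝ) : Prop :=
  ∀ s t : ℝ, s ≤ t → (t - s) / (1 + ε) ≤ c t - c s ∧ c t - c s ≤ (1 + ε) * (t - s)

namespace DriftBoundedClock

variable {ε : ℝ} {c : ℝ → ℝ}

theorem le_sub_of_mul_le_sub (hc : DriftBoundedClock ε c) (hε : 0 < 1 + ε) {s t d : ℝ}
    (hst : s ≤ t) (hwait : d * (1 + ε) ≤ c t - c s) : d ≤ t - s := by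
  refine le_of_mul_le_mul_right ?_ hε
  calc d * (1 + ε) ≤ c t - c s := hwait
    _ ≤ (1 + ε) * (t - s) := (hc s t hst).2
    _ = (t - s) * (1 + ε) := mul_comm _ _

end DriftBoundedClock

/-- Lemma 1, part 1: correctness of the GET_TS uncertainty wait. -/
theorem get_ts_correct (ε : ℝ) (hε : 0 ≤ ε) (c : ℝ → ℝ)
    (hc : DriftBoundedClock ε c)
    (L U t₁ t₂ : ℝ)
    (hL : L ≤ t₁) (hU : t₁ ≤ U) (ht : t₁ ≤ t₂)
    (hwait : c t₂ - c t₁ ≥ (U - L) * (1 + ε)) :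
    L ≤ t₁ ∧ t₁ ≤ U ∧ U ≤ t₂ := by
  have hwaited : U - L ≤ t₂ - t₁ := hc.le_sub_of_mul_le_sub (by linarith) ht hwait
  exact ⟨hL, hU, by linarith⟩
end

section
/- Let ε ≥ 0 be a real number and let c : ℝ → ℝ be an ε-drift-bounded clock. Suppose a lock is held throughout the real-time interval [t_lock, t_unlock]; that at some real time t₁ with t_lock ≤ t₁ a time interval [L, U] is obtained satisfying L ≤ t₁ ≤ U; and that the caller waits until a real time t₂ ≤ t_unlock at which c t₂ − c t₁ ≥ (U − L)·(1 + ε). Then t_lock ≤ U ≤ t_unlock, i.e. the lock is held at the global (real) time equal to the returned write timestamp U. (Lemma 1, part 2: every committed write transaction holds all its locks at the global time given by its write timestamp.) -/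
theorem DriftBoundedClock.le_sub_of_mul_le_clock_sub {ε : ℝ} {c : ℝ → ℝ}
    (hc : DriftBoundedClock ε c) (hε : 0 < 1 + ε) {s t d : ℝ} (hst : s ≤ t)
    (hd : d * (1 + ε) ≤ c t - c s) : d ≤ t - s :=
  le_of_mul_le_mul_right (hd.trans ((hc s t hst).2.trans_eq (mul_comm _ _))) hε

/-- Lemma 1, part 2: every committed write transaction holds all its locks at the
global time given by its write timestamp. -/
theorem lock_held_at_write_timestamp (ε : ℝ) (hε : 0 ≤ ε) (c : ℝ → ℝ)
    (hc : DriftBoundedClock ε c)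
    (tLock tUnlock L U t₁ t₂ : ℝ)
    (hlock : tLock ≤ t₁)
    (hL : L ≤ t₁) (hU : t₁ ≤ U)
    (ht : t₁ ≤ t₂) (hunlock : t₂ ≤ tUnlock)
    (hwait : c t₂ - c t₁ ≥ (U - L) * (1 + ε)) :
    tLock ≤ U ∧ U ≤ tUnlock := by
  have hwaited : U - L ≤ t₂ - t₁ := hc.le_sub_of_mul_le_clock_sub (by linarith) ht hwait
  exact ⟨hlock.trans hU, by linarith⟩
end

section
/- Let ε ≥ 0 be a real number and let c : ℝ → ℝ be an ε-drift-bounded clock. Let (s, m, r) be a valid synchronization record, i.e. real numbers with s ≤ m ≤ r. Then for every real time t with t ≥ r, the computed lower bound satisfies m + (c t − c r)·(1 − ε) ≤ t. (Correctness of the lower-bound function LB in FaRMv2's synchronization algorithm.) -/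
theorem mul_one_sub_le_div_one_add {d ε : ℝ} (hd : 0 ≤ d) (hε : -1 < ε) :
    d * (1 - ε) ≤ d / (1 + ε) := by
  rw [le_div_iff₀ (by linarith)]
  nlinarith [mul_nonneg hd (sq_nonneg ε)]

namespace DriftBoundedClock

variable {ε : ℝ} {c : ℝ → ℝ}

theorem monotone (hε : 0 ≤ ε) (hc : DriftBoundedClock ε c) : Monotone c := fun s t hst =>
  sub_nonneg.mp <| (div_nonneg (sub_nonneg.mpr hst) (by linarith)).trans (hc s t hst).1

theorem sub_mul_one_sub_le (hε : 0 ≤ ε) (hc : DriftBoundedClock ε c) {r t : ℝ} (hrt : r ≤ t) :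
    (c t - c r) * (1 - ε) ≤ t - r :=
  calc (c t - c r) * (1 - ε)
      ≤ (c t - c r) / (1 + ε) :=
        mul_one_sub_le_div_one_add (sub_nonneg.mpr (hc.monotone hε hrt)) (by linarith)
    _ ≤ t - r := by
        rw [div_le_iff₀ (by linarith), mul_comm]
        exact (hc r t hrt).2

end DriftBoundedClock

theorem lb_correct_general (ε : ℝ) (hε : 0 ≤ ε) (c : ℝ → ℝ)
    (hc : DriftBoundedClock ε c)
    (m r : ℝ) (hmr : m ≤ r)
    (t : ℝ) (ht : r ≤ t) :
    m + (c t - c r) * (1 - ε) ≤ t := by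
  linarith [hc.sub_mul_one_sub_le hε ht]

/-- Correctness of the lower-bound function LB in FaRMv2's synchronization algorithm. -/
theorem lb_correct (ε : ℝ) (hε : 0 ≤ ε) (c : ℝ → ℝ)
    (hc : DriftBoundedClock ε c)
    (s m r : ℝ) (hsm : s ≤ m) (hmr : m ≤ r)
    (t : ℝ) (ht : r ≤ t) :
    m + (c t - c r) * (1 - ε) ≤ t :=
  lb_correct_general ε hε c hc m r hmr t ht
end

section
/- Let ε ≥ 0 be a real number and let c : ℝ → ℝ be an ε-drift-bounded clock. Let (s, m, r) be a valid synchronization record, i.e. real numbers with s ≤ m ≤ r. Then for every real time t with t ≥ s, the computed upper bound satisfies t ≤ m + (c t − c s)·(1 + ε). (Correctness of the upper-bound function UB in FaRMv2's synchronization algorithm.) -/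
theorem DriftBoundedClock.sub_le_clock_sub_mul {ε : ℝ} {c : ℝ → ℝ} (hc : DriftBoundedClock ε c)
    (hε : -1 < ε) {s t : ℝ} (hst : s ≤ t) : t - s ≤ (c t - c s) * (1 + ε) :=
  (div_le_iff₀ (by linarith)).mp (hc s t hst).1

theorem ub_correct_general (ε : ℝ) (hε : 0 ≤ ε) (c : ℝ → ℝ)
    (hc : DriftBoundedClock ε c)
    (s m : ℝ) (hsm : s ≤ m)
    (t : ℝ) (ht : s ≤ t) :
    t ≤ m + (c t - c s) * (1 + ε) := by
  have hdrift := hc.sub_le_clock_sub_mul (by linarith) ht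
  linarith

/-- Correctness of the upper-bound function UB in FaRMv2's synchronization algorithm. -/
theorem ub_correct (ε : ℝ) (hε : 0 ≤ ε) (c : ℝ → ℝ)
    (hc : DriftBoundedClock ε c)
    (s m r : ℝ) (hsm : s ≤ m) (hmr : m ≤ r)
    (t : ℝ) (ht : s ≤ t) :
    t ≤ m + (c t - c s) * (1 + ε) :=
  ub_correct_general ε hε c hc s m hsm t ht
end

section
/- Let ε ≥ 0 be a real number, let c : ℝ → ℝ be an ε-drift-bounded clock, and let (sᵢ, mᵢ, rᵢ) for i in a nonempty finite index set be valid synchronization records (sᵢ ≤ mᵢ ≤ rᵢ for each i). Then for every real time t with t ≥ rᵢ for all i, the tightest combined bounds are still correct: max over i of (mᵢ + (c t − c rᵢ)·(1 − ε)) ≤ t ≤ min over i of (mᵢ + (c t − c sᵢ)·(1 + ε)). (Correctness of FaRMv2's optimized variant of Marzullo's algorithm, which computes the tightest lower and upper bounds using all available past synchronizations.) -/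
def syncLowerBound (ε : ℝ) (c : ℝ → ℝ) (m r t : ℝ) : ℝ := m + (c t - c r) * (1 - ε)

def syncUpperBound (ε : ℝ) (c : ℝ → ℝ) (s m t : ℝ) : ℝ := m + (c t - c s) * (1 + ε)

namespace DriftBoundedClock

variable {ε : ℝ} {c : ℝ → ℝ}

theorem sub_le_mul_one_add (hε : 0 ≤ ε) (hc : DriftBoundedClock ε c) {s t : ℝ} (hst : s ≤ t) :
    t - s ≤ (c t - c s) * (1 + ε) :=
  (div_le_iff₀ (by linarith)).1 (hc s t hst).1

theorem mul_one_sub_le_sub (hε : 0 ≤ ε) (hc : DriftBoundedClock ε c) {s t : ℝ} (hst : s ≤ t) :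
    (c t - c s) * (1 - ε) ≤ t - s := by
  rcases le_total ε 1 with hε1 | hε1
  · calc (c t - c s) * (1 - ε) ≤ (1 + ε) * (t - s) * (1 - ε) :=
          mul_le_mul_of_nonneg_right (hc s t hst).2 (by linarith)
      _ = (t - s) - ε ^ 2 * (t - s) := by ring
      _ ≤ t - s := sub_le_self _ (mul_nonneg (sq_nonneg ε) (sub_nonneg.2 hst))
  · calc (c t - c s) * (1 - ε) ≤ 0 :=
          mul_nonpos_of_nonneg_of_nonpos (sub_nonneg.2 (hc.monotone hε hst)) (by linarith)
      _ ≤ t - s := sub_nonneg.2 hst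

theorem syncLowerBound_le (hε : 0 ≤ ε) (hc : DriftBoundedClock ε c) {m r t : ℝ}
    (hmr : m ≤ r) (hrt : r ≤ t) : syncLowerBound ε c m r t ≤ t := by
  have := hc.mul_one_sub_le_sub hε hrt
  unfold syncLowerBound
  linarith

theorem le_syncUpperBound (hε : 0 ≤ ε) (hc : DriftBoundedClock ε c) {s m t : ℝ}
    (hsm : s ≤ m) (hst : s ≤ t) : t ≤ syncUpperBound ε c s m t := by
  have := hc.sub_le_mul_one_add hε hst
  unfold syncUpperBound
  linarith

end DriftBoundedClock

/-- Correctness of FaRMv2's optimized variant of Marzullo's algorithm: the tightest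
combined bounds over all available past synchronizations still bracket real time. -/
theorem marzullo_optimized_correct (ε : ℝ) (hε : 0 ≤ ε) (c : ℝ → ℝ)
    (hc : DriftBoundedClock ε c)
    {ι : Type*} (I : Finset ι) (hI : I.Nonempty)
    (s m r : ι → ℝ)
    (hsm : ∀ i ∈ I, s i ≤ m i) (hmr : ∀ i ∈ I, m i ≤ r i)
    (t : ℝ) (ht : ∀ i ∈ I, r i ≤ t) :
    I.sup' hI (fun i => m i + (c t - c (r i)) * (1 - ε)) ≤ t ∧
      t ≤ I.inf' hI (fun i => m i + (c t - c (s i)) * (1 + ε)) :=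
  ⟨I.sup'_le hI _ fun i hi => hc.syncLowerBound_le hε (hmr i hi) (ht i hi),
    I.le_inf' hI _ fun i hi =>
      hc.le_syncUpperBound hε (hsm i hi) ((hsm i hi).trans ((hmr i hi).trans (ht i hi)))⟩
end

section
/- Let ε be a real number with 0 ≤ ε ≤ 1, and for a synchronization record with master time m and local receive time T_recv define the lower-bound function ℓ(m, T_recv, T) = m + (T − T_recv)·(1 − ε) for a local clock reading T. Suppose two synchronization records (m, T_recv) and (m', T_recv') satisfy ℓ(m', T_recv', T₀) ≥ ℓ(m, T_recv, T₀) at some local clock reading T₀ (the SYNC update condition for replacing the stored record). Then for every local clock reading T₁ ≥ T₀, ℓ(m', T_recv', T₁) ≥ ℓ(m, T_recv, T₀). Consequently, under the SYNC update rule the lower bound L reported by TIME on any single thread is non-decreasing in the local clock reading, even across synchronization-state updates. -/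
/-- The lower bound computed from a synchronization record with master time `m` and
local receive time `Trecv`, at local clock reading `T`, with drift bound `ε`. -/
def lowerBound (ε m Trecv T : ℝ) : ℝ := m + (T - Trecv) * (1 - ε)

theorem lowerBound_monotone {ε : ℝ} (hε : ε ≤ 1) (m Trecv : ℝ) :
    Monotone (lowerBound ε m Trecv) := fun _ _ hT => by
  have : 0 ≤ 1 - ε := sub_nonneg.mpr hε
  unfold lowerBound
  gcongr

theorem lower_bound_monotone_across_updates_general (ε : ℝ) (hε₁ : ε ≤ 1)
    (m Trecv m' Trecv' T₀ : ℝ)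
    (hupdate : lowerBound ε m' Trecv' T₀ ≥ lowerBound ε m Trecv T₀) :
    ∀ T₁ : ℝ, T₀ ≤ T₁ → lowerBound ε m' Trecv' T₁ ≥ lowerBound ε m Trecv T₀ :=
  fun _ hT => hupdate.trans (lowerBound_monotone hε₁ m' Trecv' hT)

/-- Under the SYNC update rule, the lower bound reported by TIME on any single thread
is non-decreasing in the local clock reading, even across synchronization-state updates. -/
theorem lower_bound_monotone_across_updates (ε : ℝ) (hε₀ : 0 ≤ ε) (hε₁ : ε ≤ 1)
    (m Trecv m' Trecv' T₀ : ℝ)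
    (hupdate : lowerBound ε m' Trecv' T₀ ≥ lowerBound ε m Trecv T₀) :
    ∀ T₁ : ℝ, T₀ ≤ T₁ → lowerBound ε m' Trecv' T₁ ≥ lowerBound ε m Trecv T₀ :=
  lower_bound_monotone_across_updates_general ε hε₁ m Trecv m' Trecv' T₀ hupdate
end

section
/- Let ε ≥ 0 be a real number and let c_B : ℝ → ℝ be an ε-drift-bounded clock. Suppose transaction B obtains its write timestamp by a GET_TS call on machine B: at real time t_B1 it obtains an interval [L_B, U_B] with L_B ≤ t_B1 ≤ U_B, and it returns at real time t_B2 with c_B t_B2 − c_B t_B1 ≥ (U_B − L_B)·(1 + ε), yielding write timestamp U_B. Suppose transaction A subsequently invokes GET_TS on any machine at a real time t_A ≥ t_B2, obtaining an interval [L_A, U_A] with L_A ≤ t_A ≤ U_A and hence read timestamp U_A. Then U_A ≥ U_B. (Strictness: if transaction A starts after transaction B commits, the read timestamp of A is greater than or equal to the write timestamp of B.) -/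
theorem DriftBoundedClock.le_sub_of_mul_le_sub_s8 {ε : ℝ} (hε : 0 ≤ ε) {c : ℝ → ℝ}
    (hc : DriftBoundedClock ε c) {s t d : ℝ} (hst : s ≤ t) (hwait : d * (1 + ε) ≤ c t - c s) :
    d ≤ t - s := by
  have hfast : d * (1 + ε) ≤ (t - s) * (1 + ε) := by
    linarith [(hc s t hst).2]
  exact le_of_mul_le_mul_right hfast (by linarith)

/-- In `GET_TS`, the returned timestamp `U` has passed in real time when the call returns,
since the wait outlasts the whole uncertainty `U - L` and `L` had passed at the call. -/
theorem DriftBoundedClock.upper_le_of_wait {ε : ℝ} (hε : 0 ≤ ε) {c : ℝ → ℝ}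
    (hc : DriftBoundedClock ε c) {L U t₁ t₂ : ℝ} (hL : L ≤ t₁) (ht : t₁ ≤ t₂)
    (hwait : c t₂ - c t₁ ≥ (U - L) * (1 + ε)) :
    U ≤ t₂ := by
  linarith [hc.le_sub_of_mul_le_sub_s8 hε ht hwait]

theorem strictness_general (ε : ℝ) (hε : 0 ≤ ε)
    (cB : ℝ → ℝ) (hcB : DriftBoundedClock ε cB)
    (LB UB tB1 tB2 : ℝ)
    (hLB : LB ≤ tB1) (htB : tB1 ≤ tB2)
    (hwaitB : cB tB2 - cB tB1 ≥ (UB - LB) * (1 + ε))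
    (UA tA : ℝ)
    (htA : tB2 ≤ tA)
    (hUA : tA ≤ UA) :
    UA ≥ UB :=
  calc UB ≤ tB2 := hcB.upper_le_of_wait hε hLB htB hwaitB
    _ ≤ tA := htA
    _ ≤ UA := hUA

/-- Strictness: if transaction A starts after transaction B commits, the read
timestamp of A is greater than or equal to the write timestamp of B. -/
theorem strictness (ε : ℝ) (hε : 0 ≤ ε)
    (cB : ℝ → ℝ) (hcB : DriftBoundedClock ε cB)
    (LB UB tB1 tB2 : ℝ)
    (hLB : LB ≤ tB1) (hUB : tB1 ≤ UB) (htB : tB1 ≤ tB2)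
    (hwaitB : cB tB2 - cB tB1 ≥ (UB - LB) * (1 + ε))
    (LA UA tA : ℝ)
    (htA : tB2 ≤ tA)
    (hLA : LA ≤ tA) (hUA : tA ≤ UA) :
    UA ≥ UB :=
  strictness_general ε hε cB hcB LB UB tB1 tB2 hLB htB hwaitB UA tA htA hUA
end
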